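/- arXiv:1103.2707 — 3 statements merged into one kernel-verified Lean document; each statement's English description precedes it below -/
import Mathlib

section
/- Let X be a compact metric space, f : X → X continuous, and s > 0. For any Y ⊆ X, any n ≥ 1, and any decomposition n = n₁ + ⋯ + n_k into positive integers, the minimal number of (3s, n)-dynamical balls needed to cover Y satisfies r(3s, n, Y) ≤ ∏_{i=1}^{k} r(s, n_i, f^{n₁+⋯+n_{i−1}}(Y)). -/
open Set

/-- Dynamical ball `B_f(x, ε, n)`. -/
def dynBall {X : Type*} [MetricSpace X] (f : X → X) (x : X) (ε : ℝ) (n : ℕ) : Set X :=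
  {y | ∀ k < n, dist (f^[k] y) (f^[k] x) < ε}

/-- `covNum f ε n Y` : minimal number of `(ε,n)`-dynamical balls needed to cover `Y`. -/
noncomputable def covNum {X : Type*} [MetricSpace X] (f : X → X) (ε : ℝ) (n : ℕ)
    (Y : Set X) : ℕ∞ :=
  sInf {m : ℕ∞ | ∃ C : Finset X, (C.card : ℕ∞) = m ∧ Y ⊆ ⋃ x ∈ C, dynBall f x ε n}

/-!
Take minimal covers `Cᵢ` of `f^{n₁+⋯+nᵢ₋₁}(Y)` by `(s, nᵢ)`-balls. Any two points with the same
itinerary `c ∈ ∏ Cᵢ` are `2s`-close along every segment, hence along the whole orbit of length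
`n`; one point from each nonempty itinerary class therefore gives at most `∏ |Cᵢ|` centres of
`(3s, n)`-balls covering `Y`. If some factor is infinite the right-hand side is `⊤`, unless
`Y = ∅`, where both sides vanish.
-/

section DynBall

variable {X : Type*} [MetricSpace X] {f : X → X} {x y z : X} {ε δ : ℝ} {m l n : ℕ}

lemma dynBall_mono (h : ε ≤ δ) : dynBall f x ε n ⊆ dynBall f x δ n :=
  fun _ hy k hk => (hy k hk).trans_le h

lemma mem_dynBall_of_mem_of_mem (hy : y ∈ dynBall f x ε n) (hz : z ∈ dynBall f x δ n) :
    y ∈ dynBall f z (ε + δ) n := fun k hk =>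
  calc dist (f^[k] y) (f^[k] z) ≤ dist (f^[k] y) (f^[k] x) + dist (f^[k] z) (f^[k] x) :=
        dist_triangle_right _ _ _
    _ < ε + δ := add_lt_add (hy k hk) (hz k hk)

lemma mem_dynBall_add_iff :
    y ∈ dynBall f z ε (m + l) ↔ y ∈ dynBall f z ε m ∧ f^[m] y ∈ dynBall f (f^[m] z) ε l := by
  simp only [dynBall, mem_ofPred_eq, ← Function.iterate_add_apply]
  refine ⟨fun h => ⟨fun k hk => h k (by omega), fun j hj => h (j + m) (by omega)⟩,
    fun ⟨h₁, h₂⟩ t ht => ?_⟩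
  rcases lt_or_ge t m with htm | hmt
  · exact h₁ t htm
  · obtain ⟨j, rfl⟩ := Nat.exists_eq_add_of_le' hmt
    exact h₂ j (by omega)

lemma mem_dynBall_sum_iff (nv : ℕ → ℕ) (k : ℕ) :
    y ∈ dynBall f z ε (∑ i ∈ Finset.range k, nv i) ↔
      ∀ i < k, f^[∑ j ∈ Finset.range i, nv j] y ∈
        dynBall f (f^[∑ j ∈ Finset.range i, nv j] z) ε (nv i) := by
  induction k with
  | zero => simp [dynBall]
  | succ k ih => rw [Finset.sum_range_succ, mem_dynBall_add_iff, ih, Nat.forall_lt_succ_right]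

end DynBall

section CovNum

variable {X : Type*} [MetricSpace X] {f : X → X} {ε : ℝ} {n : ℕ} {Y : Set X}

lemma covNum_le_card {C : Finset X} (hC : Y ⊆ ⋃ x ∈ C, dynBall f x ε n) :
    covNum f ε n Y ≤ C.card :=
  sInf_le ⟨C, rfl, hC⟩

lemma covNum_empty : covNum f ε n ∅ = 0 :=
  nonpos_iff_eq_zero.1 <| (covNum_le_card (C := ∅) (empty_subset _)).trans_eq (by simp)

lemma exists_finset_card_eq_covNum (h : covNum f ε n Y ≠ ⊤) :
    ∃ C : Finset X, (C.card : ℕ∞) = covNum f ε n Y ∧ Y ⊆ ⋃ x ∈ C, dynBall f x ε n := by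
  have hne : {m : ℕ∞ | ∃ C : Finset X, (C.card : ℕ∞) = m ∧ Y ⊆ ⋃ x ∈ C, dynBall f x ε n}.Nonempty :=
    nonempty_iff_ne_empty.2 fun he => h (by rw [covNum, he, sInf_empty])
  exact csInf_mem hne

lemma covNum_ne_zero (hY : Y.Nonempty) : covNum f ε n Y ≠ 0 := by
  intro h0
  obtain ⟨C, hC, hY'⟩ := exists_finset_card_eq_covNum (h0 ▸ ENat.zero_ne_top)
  obtain rfl : C = ∅ := Finset.card_eq_zero.1 (by exact_mod_cast hC.trans h0)
  obtain ⟨y, hy⟩ := hY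
  simpa using hY' hy

lemma covNum_le_card_of_subset_biUnion {ι : Type*} {T : Finset ι} {A : ι → Set X}
    (hY : Y ⊆ ⋃ c ∈ T, A c) (hA : ∀ c, ∀ z ∈ A c, A c ⊆ dynBall f z ε n) :
    covNum f ε n Y ≤ T.card := by
  classical
  let D : Finset X := T.biUnion fun c => if h : (A c).Nonempty then {h.some} else ∅
  have hD : D.card ≤ T.card :=
    Finset.card_biUnion_le_card_mul _ _ 1 (fun c _ => by split_ifs <;> simp) |>.trans_eq
      (mul_one _)
  refine (covNum_le_card fun y hy => ?_).trans (by exact_mod_cast hD)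
  obtain ⟨c, hcT, hyc⟩ := mem_iUnion₂.1 (hY hy)
  have hc : (A c).Nonempty := ⟨y, hyc⟩
  refine mem_iUnion₂.2 ⟨hc.some, Finset.mem_biUnion.2 ⟨c, hcT, ?_⟩, hA c _ hc.some_mem hyc⟩
  simp [hc]

end CovNum

section Itinerary

variable {X : Type*} [MetricSpace X] (f : X → X) (s : ℝ) {k : ℕ} (nv : ℕ → ℕ)

/-- The points whose itinerary, in the sense of the paper, is `c`. -/
def itineraryCell (c : Fin k → X) : Set X :=
  {y | ∀ i : Fin k, f^[∑ j ∈ Finset.range i, nv j] y ∈ dynBall f (c i) s (nv i)}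

variable {f s nv}

lemma itineraryCell_subset_dynBall {c : Fin k → X} {z : X} (hz : z ∈ itineraryCell f s nv c) :
    itineraryCell f s nv c ⊆ dynBall f z (2 * s) (∑ i ∈ Finset.range k, nv i) := by
  intro y hy
  rw [mem_dynBall_sum_iff, two_mul]
  exact fun i hi => mem_dynBall_of_mem_of_mem (hy ⟨i, hi⟩) (hz ⟨i, hi⟩)

lemma subset_iUnion_itineraryCell {Y : Set X} (C : Fin k → Finset X)
    (hC : ∀ i : Fin k, f^[∑ j ∈ Finset.range i, nv j] '' Y ⊆ ⋃ x ∈ C i, dynBall f x s (nv i)) :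
    Y ⊆ ⋃ c ∈ Fintype.piFinset C, itineraryCell f s nv c := by
  intro y hy
  have hcenter (i : Fin k) :
      ∃ x ∈ C i, f^[∑ j ∈ Finset.range i, nv j] y ∈ dynBall f x s (nv i) := by
    simpa using hC i (mem_image_of_mem _ hy)
  choose c hcC hyc using hcenter
  exact mem_iUnion₂.2 ⟨c, Fintype.mem_piFinset.2 hcC, hyc⟩

lemma covNum_le_prod_card {ε : ℝ} (hε : 2 * s ≤ ε) {Y : Set X} (C : Fin k → Finset X)
    (hC : ∀ i : Fin k, f^[∑ j ∈ Finset.range i, nv j] '' Y ⊆ ⋃ x ∈ C i, dynBall f x s (nv i)) :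
    covNum f ε (∑ i ∈ Finset.range k, nv i) Y ≤ ∏ i, ((C i).card : ℕ∞) := by
  have h := covNum_le_card_of_subset_biUnion (subset_iUnion_itineraryCell C hC)
    fun c z hz => (itineraryCell_subset_dynBall hz).trans (dynBall_mono hε)
  rwa [Fintype.card_piFinset, Nat.cast_prod] at h

end Itinerary

theorem covNum_submultiplicative_general {X : Type*} [MetricSpace X]
    (f : X → X) (s : ℝ) (hs : 0 < s) (Y : Set X)
    (k : ℕ) (nv : ℕ → ℕ)
    (n : ℕ) (hn : n = ∑ i ∈ Finset.range k, nv i) :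
    covNum f (3*s) n Y ≤
      ∏ i ∈ Finset.range k,
        covNum f s (nv i) (f^[∑ j ∈ Finset.range i, nv j] '' Y) := by
  subst hn
  rw [← Fin.prod_univ_eq_prod_range
    (fun i => covNum f s (nv i) (f^[∑ j ∈ Finset.range i, nv j] '' Y))]
  by_cases hfin : ∀ i : Fin k, covNum f s (nv i) (f^[∑ j ∈ Finset.range i, nv j] '' Y) ≠ ⊤
  · choose C hCcard hC using fun i => exists_finset_card_eq_covNum (hfin i)
    calc covNum f (3 * s) (∑ i ∈ Finset.range k, nv i) Y ≤ ∏ i, ((C i).card : ℕ∞) :=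
          covNum_le_prod_card (by linarith) C hC
      _ = _ := Finset.prod_congr rfl fun i _ => hCcard i
  · obtain ⟨i, hi⟩ := not_forall_not.1 hfin
    rcases Y.eq_empty_or_nonempty with rfl | hY
    · simp [covNum_empty]
    · exact le_top.trans_eq
        (WithTop.prod_eq_top (Finset.mem_univ i) hi fun j _ => covNum_ne_zero (hY.image _)).symm

/-- Sub-multiplicativity of covering numbers along a decomposition
`n = n₁ + ⋯ + n_k` into positive integers:
`r(3s, n, Y) ≤ ∏ᵢ r(s, nᵢ, f^{n₁+⋯+n_{i−1}}(Y))`. -/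
theorem covNum_submultiplicative {X : Type*} [MetricSpace X] [CompactSpace X]
    (f : X → X) (hf : Continuous f) (s : ℝ) (hs : 0 < s) (Y : Set X)
    (k : ℕ) (hk : 1 ≤ k) (nv : ℕ → ℕ) (hpos : ∀ i < k, 0 < nv i)
    (n : ℕ) (hn : n = ∑ i ∈ Finset.range k, nv i) :
    covNum f (3*s) n Y ≤
      ∏ i ∈ Finset.range k,
        covNum f s (nv i) (f^[∑ j ∈ Finset.range i, nv j] '' Y) :=
  covNum_submultiplicative_general f s hs Y k nv n hn
end

section
/- Let f, g be homeomorphisms of a compact metric space M and π : M → M a continuous surjection with π ∘ g = f ∘ π, such that fibers have uniformly small diameter: sup_x diam(π^{−1}(x)) ≤ δ. If ν is a g-invariant ergodic Borel probability measure and h_top(g, π^{−1}(y)) ≤ c for all y ∈ M (entropy of g restricted to each fiber, in Bowen's sense), then h_ν(g) ≤ h_{π_*ν}(f) + c. -/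
open Set Filter MeasureTheory

/-- Infinite dynamical ball `B_f(x, ε, ∞)`. -/
def dynBallInf {X : Type*} [MetricSpace X] (f : X → X) (x : X) (ε : ℝ) : Set X :=
  {y | ∀ n : ℕ, dist (f^[n] y) (f^[n] x) < ε}

/-- `ε`-entropy of `f` on `Y`: `limsup (1/n) log r(ε, n, Y)`. -/
noncomputable def entSub {X : Type*} [MetricSpace X] (f : X → X) (ε : ℝ) (Y : Set X) :
    EReal :=
  Filter.limsup
    (fun n : ℕ => ((Real.log ((covNum f ε n Y).toNat) / (n : ℝ) : ℝ) : EReal))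
    Filter.atTop

/-- Topological entropy of `f` on the subset `Y` (Bowen):
`h_top(f, Y) = lim_{ε→0} limsup (1/n) log r(ε, n, Y)`. -/
noncomputable def htopSub {X : Type*} [MetricSpace X] (f : X → X) (Y : Set X) : EReal :=
  ⨆ ε : {e : ℝ // 0 < e}, entSub f ε.1 Y

/-- Misiurewicz local (tail) entropy `h_loc(f) = lim_{ε→0} sup_x h_top(f, B_f(x,ε,∞))`. -/
noncomputable def hloc {X : Type*} [MetricSpace X] (f : X → X) : EReal :=
  ⨅ ε : {e : ℝ // 0 < e}, ⨆ x : X, htopSub f (dynBallInf f x ε.1)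

/-- Minimal number of `(ε,n)`-dynamical balls whose union has `µ`-measure at least `1/2`. -/
noncomputable def covNumMu {X : Type*} [MetricSpace X] [MeasurableSpace X]
    (f : X → X) (ε : ℝ) (n : ℕ) (μ : Measure X) : ℕ∞ :=
  sInf {m : ℕ∞ | ∃ C : Finset X, (C.card : ℕ∞) = m ∧
    (1/2 : ENNReal) ≤ μ (⋃ x ∈ C, dynBall f x ε n)}

/-- Measure-theoretic entropy of an (ergodic) measure via Katok's formula, which
coincides with the Kolmogorov–Sinai entropy for ergodic measures. -/
noncomputable def measEnt {X : Type*} [MetricSpace X] [MeasurableSpace X]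
    (f : X → X) (μ : Measure X) : EReal :=
  ⨆ ε : {e : ℝ // 0 < e},
    Filter.limsup
      (fun n : ℕ => ((Real.log ((covNumMu f ε.1 n μ).toNat) / (n : ℝ) : ℝ) : EReal))
      Filter.atTop


/-! Fix a scale `ε` and a rate `β > c`. Since `h_top(g, π⁻¹{y}) < β`, each fibre is covered,
for some `L`, by at most `exp (L β)` Bowen `(L, ε/2)`-balls of `g`; by compactness (a closed-map
argument plus a Lebesgue number) there are `ρ > 0` and `N` such that the same holds, with some
`L ≤ N`, for `π⁻¹(ball w ρ)` at every point `w`. Chaining these local covers along the `f`-orbit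
of `y` covers `π⁻¹ B_f(y, ρ, n)` by at most `exp ((n + N) β)` Bowen `(n, ε)`-balls of `g`.
Pulling back a cover of half the `π_*ν`-mass by `(n, ρ)`-balls of `f` gives
`r_ν(g, ε, n) ≤ r_{π_*ν}(f, ρ, n) · exp ((n + N) β)`, and `(1/n) log` followed by `limsup` gives
the bound with `β` in place of `c`. -/

open Metric Function

section DynBall

variable {X : Type*} [MetricSpace X] {f : X → X} {x y : X} {ε : ℝ} {n : ℕ}

lemma isOpen_dynBall (hf : Continuous f) (x : X) (ε : ℝ) (n : ℕ) : IsOpen (dynBall f x ε n) := by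
  have : dynBall f x ε n = ⋂ k ∈ Finset.range n, (fun y => dist (f^[k] y) (f^[k] x)) ⁻¹' Iio ε := by
    ext y; simp [dynBall]
  rw [this]
  exact isOpen_biInter_finset fun k _ => isOpen_Iio.preimage ((hf.iterate k).dist continuous_const)

lemma mem_dynBall_self (hε : 0 < ε) : x ∈ dynBall f x ε n :=
  fun k _ => by simpa using hε

lemma mem_ball_of_mem_dynBall (h : y ∈ dynBall f x ε n) (hn : 0 < n) : y ∈ ball x ε := by
  simpa using h 0 hn

lemma iterate_mem_dynBall (h : y ∈ dynBall f x ε n) (m : ℕ) :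
    f^[m] y ∈ dynBall f (f^[m] x) ε (n - m) := fun k hk => by
  simpa only [← iterate_add_apply] using h (k + m) (by omega)

lemma exists_finset_univ_subset_dynBall [CompactSpace X] (hf : Continuous f) (hε : 0 < ε)
    (n : ℕ) : ∃ C : Finset X, univ ⊆ ⋃ x ∈ C, dynBall f x ε n :=
  isCompact_univ.elim_finite_subcover _ (fun x => isOpen_dynBall hf x ε n)
    fun y _ => mem_iUnion.2 ⟨y, mem_dynBall_self hε⟩

end DynBall

section ShadowSet

variable {X : Type*} [MetricSpace X] {g : X → X} {ε : ℝ}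

/- Chaining glues together orbit segments of different centres, so covers are first built from
sets shadowing an arbitrary sequence; the factor `2` in the radius is paid only once, at the end. -/
def shadowSet (g : X → X) (ε : ℝ) (n : ℕ) (x : ℕ → X) : Set X :=
  {z | ∀ k < n, dist (g^[k] z) (x k) < ε}

@[simp]
lemma shadowSet_zero (x : ℕ → X) : shadowSet g ε 0 x = univ := by
  simp [shadowSet]

lemma shadowSet_anti {m n : ℕ} (hmn : m ≤ n) (x : ℕ → X) :
    shadowSet g ε n x ⊆ shadowSet g ε m x :=
  fun _ hz k hk => hz k (hk.trans_le hmn)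

lemma mem_shadowSet_append {z x : X} {x' : ℕ → X} {L m : ℕ} (hz : z ∈ dynBall g x ε L)
    (hz' : g^[L] z ∈ shadowSet g ε m x') :
    z ∈ shadowSet g ε (L + m) (fun k => if k < L then g^[k] x else x' (k - L)) := by
  intro k hk
  dsimp only
  split_ifs with hkL
  · exact hz k hkL
  · simpa only [← iterate_add_apply, Nat.sub_add_cancel (not_lt.1 hkL)] using hz' (k - L) (by omega)

lemma exists_shadowSet_cover_append {S : Set X} {L m : ℕ} {C : Finset X}
    {T : Finset (ℕ → X)} (hC : S ⊆ ⋃ x ∈ C, dynBall g x ε L)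
    (hT : MapsTo g^[L] S (⋃ x ∈ T, shadowSet g ε m x)) :
    ∃ T' : Finset (ℕ → X), T'.card ≤ C.card * T.card ∧ S ⊆ ⋃ x ∈ T', shadowSet g ε (L + m) x := by
  classical
  refine ⟨(C ×ˢ T).image fun p k => if k < L then g^[k] p.1 else p.2 (k - L),
    Finset.card_image_le.trans (Finset.card_product C T).le, fun z hz => ?_⟩
  obtain ⟨x, hxC, hzx⟩ := mem_iUnion₂.1 (hC hz)
  obtain ⟨x', hx'T, hzx'⟩ := mem_iUnion₂.1 (hT hz)
  exact mem_iUnion₂.2 ⟨_, Finset.mem_image.2 ⟨(x, x'), Finset.mem_product.2 ⟨hxC, hx'T⟩, rfl⟩,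
    mem_shadowSet_append hzx hzx'⟩

lemma exists_dynBall_cover_of_shadowSet_cover {Y : Set X} {n : ℕ} {T : Finset (ℕ → X)}
    (hT : Y ⊆ ⋃ x ∈ T, shadowSet g ε n x) :
    ∃ C : Finset X, C.card ≤ T.card ∧ Y ⊆ ⋃ z ∈ C, dynBall g z (2 * ε) n := by
  classical
  let center : (ℕ → X) → X := fun x =>
    if h : (shadowSet g ε n x).Nonempty then h.some else x 0
  refine ⟨T.image center, Finset.card_image_le, fun z hz => ?_⟩
  obtain ⟨x, hxT, hzx⟩ := mem_iUnion₂.1 (hT hz)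
  have hne : (shadowSet g ε n x).Nonempty := ⟨z, hzx⟩
  have hcenter : center x ∈ shadowSet g ε n x := by
    simpa only [center, dif_pos hne] using hne.some_mem
  refine mem_iUnion₂.2 ⟨center x, Finset.mem_image_of_mem _ hxT, fun k hk => ?_⟩
  linarith [dist_triangle_right (g^[k] z) (g^[k] (center x)) (x k), hzx k hk, hcenter k hk]

end ShadowSet

section Chaining

variable {X Y : Type*} [MetricSpace X] [MetricSpace Y] [Nonempty X] {g : X → X} {f : Y → Y}
  {π : X → Y} {ε ρ β : ℝ} {N : ℕ}

lemma exists_shadowSet_cover_preimage_dynBall (hsemi : Semiconj π g f) (hβ : 0 ≤ β)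
    (hloc : ∀ w, ∃ L : ℕ, 1 ≤ L ∧ L ≤ N ∧ ∃ C : Finset X, (C.card : ℝ) ≤ Real.exp (L * β) ∧
      π ⁻¹' ball w ρ ⊆ ⋃ x ∈ C, dynBall g x ε L)
    (n : ℕ) (y : Y) :
    ∃ T : Finset (ℕ → X), (T.card : ℝ) ≤ Real.exp ((n + N) * β) ∧
      π ⁻¹' dynBall f y ρ n ⊆ ⋃ x ∈ T, shadowSet g ε n x := by
  induction n using Nat.strong_induction_on generalizing y with
  | _ n ih =>
  rcases n.eq_zero_or_pos with rfl | hn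
  · refine ⟨{fun _ => Classical.arbitrary X}, ?_, by simp⟩
    simpa using Real.one_le_exp (by positivity)
  obtain ⟨L, hL1, hLN, C, hCcard, hC⟩ := hloc y
  obtain ⟨m, T', hnm, hT'card, hT'⟩ : ∃ m, ∃ T' : Finset (ℕ → X), n ≤ L + m ∧
      (T'.card : ℝ) ≤ Real.exp ((n + N - L) * β) ∧
      π ⁻¹' dynBall f (f^[L] y) ρ (n - L) ⊆ ⋃ x ∈ T', shadowSet g ε m x := by
    by_cases hnL : n ≤ L
    · -- the local cover alone suffices: use the trivial tail of length `0`
      refine ⟨0, {fun _ => Classical.arbitrary X}, by omega, ?_, by simp⟩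
      have : (L : ℝ) ≤ N := by exact_mod_cast hLN
      simpa using Real.one_le_exp (by nlinarith)
    · obtain ⟨T', hT'card, hT'⟩ := ih (n - L) (by omega) (f^[L] y)
      refine ⟨n - L, T', by omega, ?_, hT'⟩
      rwa [Nat.cast_sub (by omega), sub_add_eq_add_sub] at hT'card
  obtain ⟨T, hTcard, hT⟩ := exists_shadowSet_cover_append (hC.trans' fun z hz =>
    mem_ball_of_mem_dynBall hz hn) fun z hz => hT' (by
      rw [mem_preimage, (hsemi.iterate_right L).eq]
      exact iterate_mem_dynBall hz L)
  refine ⟨T, ?_, hT.trans (iUnion₂_mono fun x _ => shadowSet_anti hnm x)⟩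
  calc (T.card : ℝ) ≤ C.card * T'.card := by exact_mod_cast hTcard
    _ ≤ Real.exp (L * β) * Real.exp ((n + N - L) * β) := by gcongr
    _ = Real.exp ((n + N) * β) := by rw [← Real.exp_add]; ring_nf

end Chaining

section FiberCover

variable {X Y : Type*} [MetricSpace X] [MetricSpace Y] [CompactSpace X] {g : X → X}
  {ε β : ℝ}

lemma exists_card_eq_covNum (hg : Continuous g) (hε : 0 < ε) (n : ℕ) (Z : Set X) :
    ∃ C : Finset X, (C.card : ℕ∞) = covNum g ε n Z ∧ Z ⊆ ⋃ x ∈ C, dynBall g x ε n := by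
  obtain ⟨C, hC⟩ := exists_finset_univ_subset_dynBall hg hε n
  exact csInf_mem (s := {m : ℕ∞ | ∃ C : Finset X, (C.card : ℕ∞) = m ∧
    Z ⊆ ⋃ x ∈ C, dynBall g x ε n}) ⟨_, C, rfl, (subset_univ Z).trans hC⟩

lemma exists_dynBall_cover_of_entSub_lt (hg : Continuous g) (hε : 0 < ε) {Z : Set X}
    (h : entSub g ε Z < β) :
    ∃ L : ℕ, 1 ≤ L ∧ ∃ C : Finset X, (C.card : ℝ) ≤ Real.exp (L * β) ∧
      Z ⊆ ⋃ x ∈ C, dynBall g x ε L := by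
  obtain ⟨L, hlt, hL⟩ := ((eventually_lt_of_limsup_lt h).and (eventually_ge_atTop 1)).exists
  obtain ⟨C, hCcard, hCcov⟩ := exists_card_eq_covNum hg hε L Z
  refine ⟨L, hL, C, ?_, hCcov⟩
  rw [← hCcard, ENat.toNat_natCast, EReal.coe_lt_coe_iff,
    div_lt_iff₀ (by exact_mod_cast hL), mul_comm] at hlt
  exact (Real.le_exp_log _).trans (Real.exp_le_exp.2 hlt.le)

lemma exists_uniform_preimage_ball_subset [CompactSpace Y] {π : X → Y} (hπ : Continuous π)
    {U : Y → Set X} (hU : ∀ y, IsOpen (U y)) (hfib : ∀ y, π ⁻¹' {y} ⊆ U y) :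
    ∃ s : Finset Y, ∃ ρ > 0, ∀ w, ∃ y ∈ s, π ⁻¹' ball w ρ ⊆ U y := by
  let W : Y → Set Y := fun y => (π '' (U y)ᶜ)ᶜ
  have hWopen : ∀ y, IsOpen (W y) := fun y =>
    ((hU y).isClosed_compl.isCompact.image hπ).isClosed.isOpen_compl
  have hyW : ∀ y, y ∈ W y := fun y ⟨z, hz, hzy⟩ => hz (hfib y hzy)
  have hWU : ∀ y, π ⁻¹' W y ⊆ U y := fun y z hz => by_contra fun hzU => hz ⟨z, hzU, rfl⟩
  obtain ⟨s, hs⟩ := isCompact_univ.elim_finite_subcover W hWopen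
    fun y _ => mem_iUnion.2 ⟨y, hyW y⟩
  obtain ⟨ρ, hρ, hball⟩ := lebesgue_number_lemma_of_metric isCompact_univ
    (c := fun y : s => W y) (fun y => hWopen y)
    (hs.trans (iUnion₂_subset fun y hy => subset_iUnion (fun i : s => W i) ⟨y, hy⟩))
  refine ⟨s, ρ, hρ, fun w => ?_⟩
  obtain ⟨y, hy⟩ := hball w (mem_univ w)
  exact ⟨y, y.2, (preimage_mono hy).trans (hWU y)⟩

lemma exists_uniform_local_dynBall_cover [CompactSpace Y] {π : X → Y} (hg : Continuous g)
    (hπ : Continuous π) (hε : 0 < ε) (hfib : ∀ y, entSub g ε (π ⁻¹' {y}) < β) :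
    ∃ N, ∃ ρ > 0, ∀ w, ∃ L : ℕ, 1 ≤ L ∧ L ≤ N ∧ ∃ C : Finset X,
      (C.card : ℝ) ≤ Real.exp (L * β) ∧ π ⁻¹' ball w ρ ⊆ ⋃ x ∈ C, dynBall g x ε L := by
  choose L hL C hC hcov using fun y => exists_dynBall_cover_of_entSub_lt hg hε (hfib y)
  obtain ⟨s, ρ, hρ, hs⟩ := exists_uniform_preimage_ball_subset hπ
    (fun y => isOpen_biUnion fun x _ => isOpen_dynBall hg x ε (L y)) hcov
  refine ⟨s.sup L, ρ, hρ, fun w => ?_⟩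
  obtain ⟨y, hy, hwy⟩ := hs w
  exact ⟨L y, hL y, Finset.le_sup hy, C y, hC y, hwy⟩

end FiberCover

section Measure

variable {X Y : Type*} [MetricSpace X] [MeasurableSpace X] [MetricSpace Y] [MeasurableSpace Y]
  {g : X → X} {f : Y → Y} {ε ρ : ℝ} {n : ℕ}

lemma covNumMu_le_card {μ : Measure Y} (D : Finset Y)
    (hD : 1 / 2 ≤ μ (⋃ y ∈ D, dynBall f y ρ n)) : covNumMu f ρ n μ ≤ D.card :=
  sInf_le ⟨D, rfl, hD⟩

lemma exists_card_eq_covNumMu [CompactSpace Y] (μ : Measure Y) [IsProbabilityMeasure μ]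
    (hf : Continuous f) (hρ : 0 < ρ) (n : ℕ) :
    ∃ D : Finset Y, (D.card : ℕ∞) = covNumMu f ρ n μ ∧ 1 / 2 ≤ μ (⋃ y ∈ D, dynBall f y ρ n) := by
  obtain ⟨D, hD⟩ := exists_finset_univ_subset_dynBall hf hρ n
  exact csInf_mem (s := {m : ℕ∞ | ∃ D : Finset Y, (D.card : ℕ∞) = m ∧
    1 / 2 ≤ μ (⋃ y ∈ D, dynBall f y ρ n)})
    ⟨_, D, rfl, ENNReal.half_le_self.trans (measure_univ.symm.le.trans (measure_mono hD))⟩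

lemma covNumMu_toNat_le_mul [CompactSpace Y] [OpensMeasurableSpace Y] {π : X → Y}
    (hπ : Measurable π) (hf : Continuous f) (hρ : 0 < ρ) (μ : Measure X) [IsProbabilityMeasure μ]
    {K : ℕ}
    (hK : ∀ y, ∃ C : Finset X, C.card ≤ K ∧ π ⁻¹' dynBall f y ρ n ⊆ ⋃ x ∈ C, dynBall g x ε n) :
    (covNumMu g ε n μ).toNat ≤ (covNumMu f ρ n (μ.map π)).toNat * K := by
  classical
  have := Measure.isProbabilityMeasure_map (μ := μ) hπ.aemeasurable
  choose C hCK hC using hK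
  obtain ⟨D, hDcard, hD⟩ := exists_card_eq_covNumMu (μ.map π) hf hρ n
  have hcover : π ⁻¹' (⋃ y ∈ D, dynBall f y ρ n) ⊆ ⋃ x ∈ D.biUnion C, dynBall g x ε n := by
    simp only [preimage_iUnion, Finset.set_biUnion_biUnion]
    exact iUnion₂_mono fun y _ => hC y
  have hhalf : 1 / 2 ≤ μ (⋃ x ∈ D.biUnion C, dynBall g x ε n) :=
    (hD.trans_eq (Measure.map_apply hπ
      (isOpen_biUnion fun y _ => isOpen_dynBall hf y ρ n).measurableSet)).trans
      (measure_mono hcover)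
  rw [← hDcard, ENat.toNat_natCast]
  refine ENat.toNat_le_of_le_natCast ((covNumMu_le_card _ hhalf).trans ?_)
  exact_mod_cast Finset.card_biUnion_le_card_mul D C K fun y _ => hCK y

end Measure

section Entropy

variable {X : Type*} [MetricSpace X] {f : X → X} {ε : ℝ} {Z : Set X}

lemma entSub_nonneg (f : X → X) (ε : ℝ) (Z : Set X) : 0 ≤ entSub f ε Z :=
  le_limsup_of_frequently_le (Frequently.of_forall fun _ => EReal.coe_nonneg.2 (by positivity))

lemma entSub_le_htopSub (hε : 0 < ε) : entSub f ε Z ≤ htopSub f Z :=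
  le_iSup (fun e : {e : ℝ // 0 < e} => entSub f e.1 Z) ⟨ε, hε⟩

lemma htopSub_nonneg : 0 ≤ htopSub f Z :=
  (entSub_nonneg f 1 Z).trans (entSub_le_htopSub one_pos)

end Entropy

lemma EReal.le_add_coe_of_forall_lt {x y : EReal} {c : ℝ} (h : ∀ β : ℝ, c < β → x ≤ y + β) :
    x ≤ y + c :=
  le_add_of_forall_gt (.inr (coe_ne_top c)) (.inr (coe_ne_bot c)) fun _ ha _ hb => by
    obtain ⟨β, hcβ, hβb⟩ := EReal.lt_iff_exists_real_btwn.1 hb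
    exact (h β (EReal.coe_lt_coe_iff.1 hcβ)).trans (add_le_add ha.le hβb.le)

lemma tendsto_add_mul_div_atTop (N : ℕ) (β : ℝ) :
    Tendsto (fun n : ℕ => (n + N) * β / n) atTop (nhds β) := by
  have h := (tendsto_const_div_atTop_nhds_zero_nat (N * β : ℝ)).const_add β
  rw [add_zero] at h
  refine h.congr' ((eventually_ne_atTop 0).mono fun n hn => ?_)
  field_simp

lemma limsup_log_div_le_add {a b : ℕ → ℕ} {β : ℝ} (hβ : 0 ≤ β) (N : ℕ)
    (h : ∀ n, (a n : ℝ) ≤ b n * Real.exp ((n + N) * β)) :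
    limsup (fun n : ℕ => ((Real.log (a n) / n : ℝ) : EReal)) atTop ≤
      limsup (fun n : ℕ => ((Real.log (b n) / n : ℝ) : EReal)) atTop + β := by
  have hlog : ∀ n, Real.log (a n) ≤ Real.log (b n) + (n + N) * β := by
    intro n
    rcases (a n).eq_zero_or_pos with ha | ha
    · rw [ha, Nat.cast_zero, Real.log_zero]
      positivity
    have hb : 0 < b n := Nat.pos_of_ne_zero fun hb => by
      have := h n
      rw [hb, Nat.cast_zero, zero_mul] at this
      exact (Nat.cast_pos.2 ha).not_ge this
    calc Real.log (a n) ≤ Real.log (b n * Real.exp ((n + N) * β)) :=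
          Real.log_le_log (by exact_mod_cast ha) (h n)
      _ = Real.log (b n) + (n + N) * β := by
          rw [Real.log_mul (by positivity) (Real.exp_ne_zero _), Real.log_exp]
  have hlim : Tendsto (fun n : ℕ => (((n + N) * β / n : ℝ) : EReal)) atTop (nhds β) :=
    EReal.tendsto_coe.2 (tendsto_add_mul_div_atTop N β)
  calc limsup (fun n : ℕ => ((Real.log (a n) / n : ℝ) : EReal)) atTop
      ≤ limsup ((fun n : ℕ => ((Real.log (b n) / n : ℝ) : EReal)) +
          fun n : ℕ => (((n + N) * β / n : ℝ) : EReal)) atTop :=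
        limsup_le_limsup (Eventually.of_forall fun n => by
          simpa only [Pi.add_apply, ← EReal.coe_add, EReal.coe_le_coe_iff, ← add_div] using
            div_le_div_of_nonneg_right (hlog n) n.cast_nonneg)
    _ ≤ _ := EReal.limsup_add_le (.inr (by simp [hlim.limsup_eq])) (.inr (by simp [hlim.limsup_eq]))
    _ = _ := by rw [hlim.limsup_eq]

lemma limsup_log_covNumMu_le {X Y : Type*} [MetricSpace X] [CompactSpace X] [Nonempty X]
    [MeasurableSpace X] [OpensMeasurableSpace X] [MetricSpace Y] [CompactSpace Y]
    [MeasurableSpace Y] [BorelSpace Y] {g : X → X} {f : Y → Y} {π : X → Y}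
    (hg : Continuous g) (hf : Continuous f) (hπ : Continuous π) (hsemi : Semiconj π g f)
    (μ : Measure X) [IsProbabilityMeasure μ] {ε β : ℝ} (hε : 0 < ε) (hβ : 0 ≤ β)
    (hfib : ∀ y, entSub g (ε / 2) (π ⁻¹' {y}) < β) :
    limsup (fun n : ℕ => ((Real.log (covNumMu g ε n μ).toNat / n : ℝ) : EReal)) atTop ≤
      measEnt f (μ.map π) + β := by
  obtain ⟨N, ρ, hρ, hloc⟩ := exists_uniform_local_dynBall_cover hg hπ (half_pos hε) hfib
  have hcover : ∀ (n : ℕ) y, ∃ C : Finset X, C.card ≤ ⌊Real.exp ((n + N) * β)⌋₊ ∧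
      π ⁻¹' dynBall f y ρ n ⊆ ⋃ x ∈ C, dynBall g x ε n := by
    intro n y
    obtain ⟨T, hTcard, hT⟩ := exists_shadowSet_cover_preimage_dynBall hsemi hβ hloc n y
    obtain ⟨C, hCT, hC⟩ := exists_dynBall_cover_of_shadowSet_cover hT
    rw [mul_div_cancel₀ ε two_ne_zero] at hC
    exact ⟨C, hCT.trans (Nat.le_floor hTcard), hC⟩
  have hρ_term : limsup (fun n : ℕ => ((Real.log (covNumMu f ρ n (μ.map π)).toNat / n : ℝ) : EReal))
      atTop ≤ measEnt f (μ.map π) :=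
    le_iSup_of_le (ι := {e : ℝ // 0 < e}) ⟨ρ, hρ⟩ le_rfl
  refine (limsup_log_div_le_add hβ N fun n => ?_).trans (add_le_add hρ_term le_rfl)
  calc ((covNumMu g ε n μ).toNat : ℝ)
      ≤ (covNumMu f ρ n (μ.map π)).toNat * ⌊Real.exp ((n + N) * β)⌋₊ := by
        exact_mod_cast covNumMu_toNat_le_mul hπ.measurable hf hρ μ (hcover n)
    _ ≤ (covNumMu f ρ n (μ.map π)).toNat * Real.exp ((n + N) * β) := by
        gcongr
        exact Nat.floor_le (Real.exp_pos _).le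

theorem ledrappier_walters_small_fibers_general {M : Type*} [MetricSpace M] [CompactSpace M]
    [MeasurableSpace M] [BorelSpace M]
    (f g : M ≃ₜ M) (π : M → M) (hπc : Continuous π)
    (hsemi : ∀ x, π (g x) = f (π x))
    (c : ℝ) (hc : ∀ y : M, htopSub (⇑g) (π ⁻¹' {y}) ≤ (c : EReal))
    (ν : Measure M) (hprob : IsProbabilityMeasure ν) :
    measEnt (⇑g) ν ≤ measEnt (⇑f) (ν.map π) + (c : EReal) := by
  have : Nonempty M := nonempty_of_isProbabilityMeasure ν
  have hc₀ : 0 ≤ c :=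
    EReal.coe_nonneg.1 (htopSub_nonneg.trans (hc (π (Classical.arbitrary M))))
  refine iSup_le fun ε => EReal.le_add_coe_of_forall_lt fun β hcβ => ?_
  refine limsup_log_covNumMu_le g.continuous f.continuous hπc hsemi ν ε.2 (hc₀.trans hcβ.le)
    fun y => ?_
  exact ((entSub_le_htopSub (half_pos ε.2)).trans (hc y)).trans_lt (EReal.coe_lt_coe_iff.2 hcβ)

/-- Ledrappier–Walters inequality for a factor map with small fibers: if
`π ∘ g = f ∘ π` with `π` a continuous surjection whose fibers have diameter at
most `δ`, and the topological entropy of `g` on each fiber is at most `c`, then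
`h_ν(g) ≤ h_{π_*ν}(f) + c` for every ergodic `g`-invariant probability measure `ν`. -/
theorem ledrappier_walters_small_fibers {M : Type*} [MetricSpace M] [CompactSpace M]
    [MeasurableSpace M] [BorelSpace M]
    (f g : M ≃ₜ M) (π : M → M) (hπc : Continuous π) (hπs : Function.Surjective π)
    (hsemi : ∀ x, π (g x) = f (π x))
    (δ : ℝ) (hδ : 0 ≤ δ) (hfib : ∀ y : M, Metric.diam (π ⁻¹' {y}) ≤ δ)
    (c : ℝ) (hc : ∀ y : M, htopSub (⇑g) (π ⁻¹' {y}) ≤ (c : EReal))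
    (ν : Measure M) (hprob : IsProbabilityMeasure ν) (herg : Ergodic (⇑g) ν) :
    measEnt (⇑g) ν ≤ measEnt (⇑f) (ν.map π) + (c : EReal) :=
  ledrappier_walters_small_fibers_general f g π hπc hsemi c hc ν hprob
end

section
/- Let E = E₁ ⊕ E₂ be a splitting of a normed space. If T : E → E is a linear map which is block upper triangular with diagonal blocks Λ_cs on E₁ satisfying ‖Λ_cs‖ ≤ e^{γ/2}, Λ_u on E₂ satisfying ‖Λ_u^{−1}‖ ≤ 1/λ₃ with λ₃ > e^{γ/2}, and off-diagonal block K, and if α < (λ₃ − e^{γ/2})/‖K‖, then T^{−1} maps the cone C^s_α = {(v₁, v₂) : ‖v₂‖ ≤ α‖v₁‖} (aperture α around E₁) into itself. -/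
/-- Cone invariance under the inverse of a block upper-triangular map:
`T(v₁, v₂) = (Λcs v₁ + K v₂, Λu v₂)` with `‖Λcs‖ ≤ e^{γ/2}`, `‖Λu v₂‖ ≥ lam₃‖v₂‖`,
`lam₃ > e^{γ/2}`, and aperture `α < (lam₃ − e^{γ/2})/‖K‖`. Then `T⁻¹` maps the
cone `C^s_α = {(v₁,v₂) : ‖v₂‖ ≤ α‖v₁‖}` into itself, i.e. if `T(v₁,v₂) ∈ C^s_α`
then `(v₁,v₂) ∈ C^s_α`. -/
theorem inverse_cone_invariance {E₁ E₂ : Type*}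
    [NormedAddCommGroup E₁] [NormedSpace ℝ E₁]
    [NormedAddCommGroup E₂] [NormedSpace ℝ E₂]
    (Λcs : E₁ →L[ℝ] E₁) (K : E₂ →L[ℝ] E₁) (Λu : E₂ →L[ℝ] E₂)
    (γ lam₃ α : ℝ) (hγ : 0 ≤ γ) (hα : 0 < α)
    (hcs : ∀ v₁ : E₁, ‖Λcs v₁‖ ≤ Real.exp (γ/2) * ‖v₁‖)
    (hu : ∀ v₂ : E₂, lam₃ * ‖v₂‖ ≤ ‖Λu v₂‖)
    (hlam : Real.exp (γ/2) < lam₃)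
    (haper : α < (lam₃ - Real.exp (γ/2)) / ‖K‖) :
    ∀ v₁ : E₁, ∀ v₂ : E₂, ‖Λu v₂‖ ≤ α * ‖Λcs v₁ + K v₂‖ → ‖v₂‖ ≤ α * ‖v₁‖ := by
  intro v₁ v₂ h
  set e := Real.exp (γ/2) with he_def
  have he : 0 < e := Real.exp_pos _
  have hK : 0 < ‖K‖ := by
    rcases (norm_nonneg K).lt_or_eq with h' | h'
    · exact h'
    · exfalso; rw [← h', div_zero] at haper; linarith
  have key : α * ‖K‖ < lam₃ - e := (lt_div_iff₀ hK).mp haper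
  have h1 : lam₃ * ‖v₂‖ ≤ α * (e * ‖v₁‖ + ‖K‖ * ‖v₂‖) := by
    calc lam₃ * ‖v₂‖ ≤ ‖Λu v₂‖ := hu v₂
      _ ≤ α * ‖Λcs v₁ + K v₂‖ := h
      _ ≤ α * (‖Λcs v₁‖ + ‖K v₂‖) := by
          exact mul_le_mul_of_nonneg_left (norm_add_le _ _) hα.le
      _ ≤ α * (e * ‖v₁‖ + ‖K‖ * ‖v₂‖) := by
          exact mul_le_mul_of_nonneg_left (add_le_add (hcs v₁) (K.le_opNorm v₂)) hα.le
  nlinarith [norm_nonneg v₁, norm_nonneg v₂, mul_nonneg hα.le (norm_nonneg v₁),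
    mul_le_mul_of_nonneg_right key.le (norm_nonneg v₂)]
end
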